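/- For any Π⁰₁ class P ⊆ 2^ℕ, the index set I(W[P]) = { e : deg_T(W_e) is the Turing degree of some element of P } is Σ⁰₄. -/

import Mathlib

open Classical

/-- The characteristic function (into `ℕ`) of a set of naturals, as a partial function,
used as an oracle. -/
noncomputable def chi (A : Set ℕ) : ℕ →. ℕ :=
  fun n => Part.some (if n ∈ A then 1 else 0)

/-- The characteristic function (into `Bool`) of a set of naturals. -/
noncomputable def chib (A : Set ℕ) : ℕ → Bool :=
  fun n => decide (n ∈ A)

/-- Codes for oracle Turing machines: partial recursive functions relative to an oracle. -/
inductive OCode : Type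
  | zero | succ | left | right | oracle
  | pair : OCode → OCode → OCode
  | comp : OCode → OCode → OCode
  | prec : OCode → OCode → OCode
  | rfind' : OCode → OCode

/-- Evaluation of an oracle machine code relative to the oracle `g`. -/
def OCode.eval (g : ℕ →. ℕ) : OCode → ℕ →. ℕ
  | .zero => pure 0
  | .succ => fun n => Part.some (n + 1)
  | .left => fun n => Part.some (Nat.unpair n).1
  | .right => fun n => Part.some (Nat.unpair n).2
  | .oracle => g
  | .pair cf cg => fun n => Nat.pair <$> OCode.eval g cf n <*> OCode.eval g cg n
  | .comp cf cg => fun n => OCode.eval g cg n >>= OCode.eval g cf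
  | .prec cf cg =>
    Nat.unpaired fun a n =>
      n.rec (OCode.eval g cf a) fun y IH => do
        let i ← IH
        OCode.eval g cg (Nat.pair a (Nat.pair y i))
  | .rfind' cf =>
    Nat.unpaired fun a m =>
      (Nat.rfind fun n => (fun m => m = 0) <$> OCode.eval g cf (Nat.pair a (n + m))).map (· + m)

/-- An enumeration of the oracle machine codes by natural numbers. -/
def OCode.ofNat : ℕ → OCode
  | 0 => .zero
  | 1 => .succ
  | 2 => .left
  | 3 => .right
  | 4 => .oracle
  | n + 5 =>
    let m := n.div2.div2
    have hm : m < n + 5 := by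
      simp only [m, Nat.div2_val]
      exact
        lt_of_le_of_lt (le_trans (Nat.div_le_self _ _) (Nat.div_le_self _ _))
          (Nat.lt_succ_of_le (Nat.le_add_right _ _))
    have _m1 : m.unpair.1 < n + 5 := lt_of_le_of_lt m.unpair_left_le hm
    have _m2 : m.unpair.2 < n + 5 := lt_of_le_of_lt m.unpair_right_le hm
    match n.bodd, n.div2.bodd with
    | false, false => .pair (OCode.ofNat m.unpair.1) (OCode.ofNat m.unpair.2)
    | false, true  => .comp (OCode.ofNat m.unpair.1) (OCode.ofNat m.unpair.2)
    | true , false => .prec (OCode.ofNat m.unpair.1) (OCode.ofNat m.unpair.2)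
    | true , true  => .rfind' (OCode.ofNat m)
decreasing_by all_goals first | exact _m1 | exact _m2 | exact hm

/-- `B` is Turing reducible to `A`: some oracle machine with oracle (the characteristic
function of) `A` computes the characteristic function of `B`. -/
def TuringReducibleSet (B A : Set ℕ) : Prop :=
  ∃ c : OCode, ∀ n, OCode.eval (chi A) c n = Part.some (if n ∈ B then 1 else 0)

/-- Turing equivalence of sets of naturals. -/
def TuringEquiv (A B : Set ℕ) : Prop :=
  TuringReducibleSet A B ∧ TuringReducibleSet B A

/-- A set of naturals is computably enumerable iff it is the domain of a partial
computable function. -/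
def CE (A : Set ℕ) : Prop :=
  ∃ c : Nat.Partrec.Code, A = { n | (c.eval n).Dom }

/-- A set has c.e. (Turing) degree iff it is Turing equivalent to a c.e. set. -/
def CEDegree (X : Set ℕ) : Prop :=
  ∃ W : Set ℕ, CE W ∧ TuringEquiv X W

/-- The halting problem `∅′`. -/
def HaltingSet : Set ℕ :=
  { e | ((Denumerable.ofNat Nat.Partrec.Code e).eval e).Dom }

/-- The `e`-th computably enumerable set `W_e`. -/
def WSet (e : ℕ) : Set ℕ :=
  { n | ((Denumerable.ofNat Nat.Partrec.Code e).eval n).Dom }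

/-- `B` is weak truth table reducible to `A` with use bound `f`: a partial computable
functional, given `x` and the first `f x` bits of `A`, converges to `B(x)`. -/
def WttReducibleWith (f : ℕ → ℕ) (B A : Set ℕ) : Prop :=
  ∃ F : ℕ → List Bool →. Bool, Partrec₂ F ∧
    ∀ x, F x ((List.range (f x)).map (chib A)) = Part.some (chib B x)

/-- Weak truth table reducibility: Turing reducibility with computably bounded use. -/
def WttReducible (B A : Set ℕ) : Prop :=
  ∃ f : ℕ → ℕ, Computable f ∧ WttReducibleWith f B A

/-- A `Π⁰₁` class: the set of infinite paths through a computable binary tree. -/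
def Pi01Class (P : Set (Set ℕ)) : Prop :=
  ∃ T : List Bool → Bool, Computable T ∧
    ∀ Z : Set ℕ, Z ∈ P ↔ ∀ n, T ((List.range n).map (chib Z)) = true

/-- A `Σ⁰₄` set of naturals: a four-quantifier form over a computable matrix. -/
def Sigma04 (S : Set ℕ) : Prop :=
  ∃ R : ℕ × ℕ × ℕ × ℕ × ℕ → Bool, Computable R ∧
    ∀ e, e ∈ S ↔ ∃ a, ∀ b, ∃ c, ∀ d, R (e, a, b, c, d) = true

/-!
`e` lies in the index set iff there are oracle codes `ci`, `di` such that `Z := Φ_ci^{W_e}` is a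
total `0/1`-valued function, every initial segment of `Z` lies on the tree `T`, and
`Φ_di^Z = W_e`. By the use principle each of these facts about a single argument `n` is
witnessed by finite data `(s, k, k₂, w)`: a stage `s` by which `W_e ↾ k` has settled (a `Π⁰₁`
condition, checked against every later stage `t`), the bits of `Z` below the `Z`-use `k₂`
computed by `Φ_ci` from the stage-`s` approximation of `W_e ↾ k`, and the value `w` of `Φ_di`
on these bits, which must agree with `W_e(n)` (again a `Π⁰₁` condition when `w = 0`). This gives
the form `∃ (ci, di) ∀ n ∃ (s, k, k₂, w) ∀ t` over a computable matrix.
-/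

open Filter
open Nat.Partrec (Code)

namespace OCode

theorem ofNat_four_mul_add_five (m : ℕ) :
    ofNat (4 * m + 5) = pair (ofNat m.unpair.1) (ofNat m.unpair.2) := by
  rw [ofNat, Nat.div2_val, Nat.div2_val, show 4 * m / 2 = 2 * m by omega,
    show 2 * m / 2 = m by omega]
  simp [Nat.bodd_mul]

theorem ofNat_four_mul_add_six (m : ℕ) :
    ofNat (4 * m + 6) = prec (ofNat m.unpair.1) (ofNat m.unpair.2) := by
  rw [show 4 * m + 6 = (4 * m + 1) + 5 by ring, ofNat, Nat.div2_val, Nat.div2_val,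
    show (4 * m + 1) / 2 = 2 * m by omega, show 2 * m / 2 = m by omega]
  simp [Nat.bodd_mul]

theorem ofNat_four_mul_add_seven (m : ℕ) :
    ofNat (4 * m + 7) = comp (ofNat m.unpair.1) (ofNat m.unpair.2) := by
  rw [show 4 * m + 7 = (4 * m + 2) + 5 by ring, ofNat, Nat.div2_val, Nat.div2_val,
    show (4 * m + 2) / 2 = 2 * m + 1 by omega, show (2 * m + 1) / 2 = m by omega]
  simp [Nat.bodd_mul]

theorem ofNat_four_mul_add_eight (m : ℕ) : ofNat (4 * m + 8) = rfind' (ofNat m) := by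
  rw [show 4 * m + 8 = (4 * m + 3) + 5 by ring, ofNat, Nat.div2_val, Nat.div2_val,
    show (4 * m + 3) / 2 = 2 * m + 1 by omega, show (2 * m + 1) / 2 = m by omega]
  simp [Nat.bodd_mul]

def encode : OCode → ℕ
  | zero => 0
  | succ => 1
  | left => 2
  | right => 3
  | oracle => 4
  | pair cf cg => 4 * Nat.pair cf.encode cg.encode + 5
  | prec cf cg => 4 * Nat.pair cf.encode cg.encode + 6
  | comp cf cg => 4 * Nat.pair cf.encode cg.encode + 7
  | rfind' cf => 4 * cf.encode + 8

theorem ofNat_encode (c : OCode) : ofNat c.encode = c := by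
  induction c <;> simp [encode, ofNat_four_mul_add_five, ofNat_four_mul_add_six,
    ofNat_four_mul_add_seven, ofNat_four_mul_add_eight, ofNat, *]

theorem ofNat_surjective : Function.Surjective ofNat :=
  fun c => ⟨c.encode, c.ofNat_encode⟩

theorem eval_prec_pair (g : ℕ →. ℕ) (cf cg : OCode) (a m : ℕ) :
    (prec cf cg).eval g (Nat.pair a m) =
      m.rec (cf.eval g a) fun y IH => IH.bind fun i =>
        cg.eval g (Nat.pair a (Nat.pair y i)) := by
  simp [eval, Nat.unpaired]

theorem mem_eval_rfind' {g : ℕ →. ℕ} {cf : OCode} {n a : ℕ} :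
    a ∈ (rfind' cf).eval g n ↔ ∃ y, (0 ∈ cf.eval g (Nat.pair n.unpair.1 (y + n.unpair.2)) ∧
      ∀ {z}, z < y → ∃ v ∈ cf.eval g (Nat.pair n.unpair.1 (z + n.unpair.2)), v ≠ 0) ∧
      y + n.unpair.2 = a := by
  constructor
  · intro h
    obtain ⟨y, hy, rfl⟩ := (Part.mem_map_iff _).1 h
    obtain ⟨h1, h2⟩ := Nat.mem_rfind.1 hy
    refine ⟨y, ⟨?_, fun {z} hz => ?_⟩, rfl⟩
    · obtain ⟨v, hv, hv0⟩ := (Part.mem_map_iff _).1 h1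
      simp only [decide_eq_true_eq] at hv0
      exact hv0 ▸ hv
    · obtain ⟨v, hv, hv0⟩ := (Part.mem_map_iff _).1 (h2 hz)
      exact ⟨v, hv, by simpa using hv0⟩
  · rintro ⟨y, ⟨h1, h2⟩, rfl⟩
    refine (Part.mem_map_iff _).2 ⟨y, Nat.mem_rfind.2
      ⟨(Part.mem_map_iff _).2 ⟨0, h1, by simp⟩, fun {z} hz => ?_⟩, rfl⟩
    obtain ⟨v, hv, hv0⟩ := h2 hz
    exact (Part.mem_map_iff _).2 ⟨v, hv, by simpa using hv0⟩

theorem eventually_mem_eval {ι : Type*} {l : Filter ι} {f : ℕ →. ℕ} {g : ι → ℕ →. ℕ}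
    (hg : ∀ n a, a ∈ f n → ∀ᶠ i in l, a ∈ g i n) (c : OCode) :
    ∀ n a, a ∈ c.eval f n → ∀ᶠ i in l, a ∈ c.eval (g i) n := by
  induction c with
  | zero | succ | left | right => exact fun n a h => Eventually.of_forall fun _ => h
  | oracle => exact hg
  | pair cf cg ihf ihg =>
    intro n a h
    simp only [eval, Seq.seq, Part.map_eq_map, Part.bind_map, Part.mem_bind_iff,
      Part.mem_map_iff] at h ⊢
    obtain ⟨x, hx, y, hy, rfl⟩ := h
    filter_upwards [ihf n x hx, ihg n y hy] with i hx hy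
    exact ⟨x, hx, y, hy, rfl⟩
  | comp cf cg ihf ihg =>
    intro n a h
    obtain ⟨x, hx, ha⟩ := Part.mem_bind_iff.1 h
    filter_upwards [ihg n x hx, ihf x a ha] with i hx ha
    exact Part.mem_bind_iff.2 ⟨x, hx, ha⟩
  | prec cf cg ihf ihg =>
    intro n
    rw [← Nat.pair_unpair n]
    simp_rw [eval_prec_pair]
    induction n.unpair.2 with
    | zero => exact ihf _
    | succ m ihm =>
      intro a h
      obtain ⟨x, hx, ha⟩ := Part.mem_bind_iff.1 h
      filter_upwards [ihm x hx, ihg _ a ha] with i hx ha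
      exact Part.mem_bind_iff.2 ⟨x, hx, ha⟩
  | rfind' cf ih =>
    intro n a h
    obtain ⟨y, ⟨h0, hlt⟩, rfl⟩ := mem_eval_rfind'.1 h
    have hlt' : ∀ᶠ i in l, ∀ z ∈ Finset.range y, ∃ v ∈ cf.eval (g i)
        (Nat.pair n.unpair.1 (z + n.unpair.2)), v ≠ 0 :=
      (eventually_all_finset _).2 fun z hz =>
        let ⟨v, hv, hv0⟩ := hlt (Finset.mem_range.1 hz)
        (ih _ _ hv).mono fun _ hi => ⟨v, hi, hv0⟩
    filter_upwards [ih _ _ h0, hlt'] with i h0 hlt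
    exact mem_eval_rfind'.2 ⟨y, ⟨h0, fun hz => hlt _ (Finset.mem_range.2 hz)⟩, rfl⟩

-- Monotonicity is continuity along the constant family `fun _ : Unit => g`.
theorem eval_mono {f g : ℕ →. ℕ} (h : ∀ n, f n ≤ g n) (c : OCode) (n : ℕ) :
    c.eval f n ≤ c.eval g n :=
  fun a ha => eventually_pure.1 <| eventually_mem_eval (l := pure ()) (g := fun _ => g)
    (fun n a ha => eventually_pure.2 (h n a ha)) c n a ha

end OCode

def listOracle (σ : List Bool) : ℕ →. ℕ :=
  fun n => Part.ofOption (σ[n]?.map fun b => cond b 1 0)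

noncomputable def initSeg (Z : Set ℕ) (k : ℕ) : List Bool :=
  (List.range k).map (chib Z)

theorem chi_apply (Z : Set ℕ) (n : ℕ) : chi Z n = Part.some (cond (chib Z n) 1 0) := by
  by_cases h : n ∈ Z <;> simp [chi, chib, h]

theorem listOracle_initSeg_le_chi (Z : Set ℕ) (k n : ℕ) :
    listOracle (initSeg Z k) n ≤ chi Z n := by
  intro a ha
  by_cases hn : n < k <;> simp_all [listOracle, initSeg, chi_apply]

theorem eventually_mem_listOracle_initSeg {Z : Set ℕ} {n a : ℕ} (h : a ∈ chi Z n) :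
    ∀ᶠ k in atTop, a ∈ listOracle (initSeg Z k) n := by
  filter_upwards [eventually_gt_atTop n] with k hk
  simp_all [listOracle, initSeg, chi_apply]

theorem partrec_listOracle :
    Partrec fun x : List Bool × ℕ => listOracle x.1 x.2 := by
  refine Computable.ofOption (Computable.option_map ?_ ?_)
  · exact Primrec.list_getElem?.to_comp
  · exact (Primrec.cond Primrec.snd (Primrec.const 1) (Primrec.const 0)).to_comp.to₂

theorem exists_code_listOracle :
    ∃ c : Code, ∀ σ n, c.eval (Nat.pair (Encodable.encode σ) n) = listOracle σ n := by
  obtain ⟨c, hc⟩ := Code.exists_code.1 partrec_listOracle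
  refine ⟨c, fun σ n => ?_⟩
  simpa [Encodable.encodek, Part.map_id'] using congrFun hc (Encodable.encode (σ, n))

noncomputable def oracleCode (σ : List Bool) : Code :=
  exists_code_listOracle.choose.curry (Encodable.encode σ)

theorem eval_oracleCode (σ : List Bool) : (oracleCode σ).eval = listOracle σ := by
  funext n
  rw [oracleCode, Code.eval_curry, exists_code_listOracle.choose_spec]

theorem primrec_oracleCode : Primrec oracleCode :=
  Code.primrec₂_curry.comp (Primrec.const _) Primrec.encode

namespace OCode

theorem eval_listOracle_initSeg_le (Z : Set ℕ) (k : ℕ) (c : OCode) (n : ℕ) :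
    c.eval (listOracle (initSeg Z k)) n ≤ c.eval (chi Z) n :=
  eval_mono (listOracle_initSeg_le_chi Z k) c n

theorem eventually_mem_eval_initSeg {Z : Set ℕ} {c : OCode} {n a : ℕ}
    (h : a ∈ c.eval (chi Z) n) : ∀ᶠ k in atTop, a ∈ c.eval (listOracle (initSeg Z k)) n :=
  eventually_mem_eval (fun _ _ => eventually_mem_listOracle_initSeg) c n a h

noncomputable def toCode (σ : List Bool) : OCode → Code
  | zero => .zero
  | succ => .succ
  | left => .left
  | right => .right
  | oracle => oracleCode σ
  | pair cf cg => .pair (cf.toCode σ) (cg.toCode σ)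
  | comp cf cg => .comp (cf.toCode σ) (cg.toCode σ)
  | prec cf cg => .prec (cf.toCode σ) (cg.toCode σ)
  | rfind' cf => .rfind' (cf.toCode σ)

theorem eval_toCode (σ : List Bool) (c : OCode) : (c.toCode σ).eval = c.eval (listOracle σ) := by
  induction c with
  | oracle => exact eval_oracleCode σ
  | zero | succ | left | right => rfl
  | pair _ _ ihf ihg | comp _ _ ihf ihg | prec _ _ ihf ihg =>
    simp only [toCode, Code.eval, eval, ihf, ihg]; rfl
  | rfind' _ ih => simp only [toCode, Code.eval, eval, ih]; rfl

theorem mem_eval_of_evaln_toCode {Z : Set ℕ} {c : OCode} {k s n v : ℕ}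
    (h : Code.evaln s (c.toCode (initSeg Z k)) n = some v) : v ∈ c.eval (chi Z) n := by
  refine eval_listOracle_initSeg_le Z k c n v ?_
  rw [← eval_toCode]
  exact Code.evaln_sound h

theorem eventually_mem_eval_toCode {Z : Set ℕ} {c : OCode} {n v : ℕ} (h : v ∈ c.eval (chi Z) n) :
    ∀ᶠ k in atTop, v ∈ (c.toCode (initSeg Z k)).eval n := by
  simpa only [eval_toCode] using eventually_mem_eval_initSeg h

end OCode

-- One step of a course-of-values recursion for `(OCode.ofNat n).toCode σ`, mirroring `OCode.ofNat`.
noncomputable def toCodeStep (σ : List Bool) (l : List Code) : Option Code :=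
  if l.length < 5 then [Code.zero, .succ, .left, .right, oracleCode σ][l.length]?
  else if (l.length - 5) % 4 = 3 then l[(l.length - 5) / 4]?.map Code.rfind'
  else (l[((l.length - 5) / 4).unpair.1]?).bind fun x => (l[((l.length - 5) / 4).unpair.2]?).map
    fun y => if (l.length - 5) % 4 = 0 then .pair x y
      else if (l.length - 5) % 4 = 1 then .prec x y else .comp x y

theorem toCodeStep_spec (σ : List Bool) (n : ℕ) :
    toCodeStep σ ((List.range n).map fun i => (OCode.ofNat i).toCode σ) =
      some ((OCode.ofNat n).toCode σ) := by
  rcases lt_or_ge n 5 with hn | hn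
  · interval_cases n <;> simp [toCodeStep, OCode.ofNat, OCode.toCode]
  · obtain ⟨k, rfl⟩ := Nat.exists_eq_add_of_le' hn
    obtain ⟨m, r, hr, rfl⟩ : ∃ m r, r < 4 ∧ k = 4 * m + r :=
      ⟨k / 4, k % 4, Nat.mod_lt _ (by norm_num), (Nat.div_add_mod k 4).symm⟩
    have hm : m < 4 * m + r + 5 := by omega
    have hm₁ : m.unpair.1 < 4 * m + r + 5 := (Nat.unpair_left_le m).trans_lt hm
    have hm₂ : m.unpair.2 < 4 * m + r + 5 := (Nat.unpair_right_le m).trans_lt hm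
    have hdiv : (4 * m + r) / 4 = m := by omega
    have hmod : (4 * m + r) % 4 = r := by omega
    interval_cases r <;> simp [toCodeStep, hm, hm₁, hm₂, hdiv, hmod, OCode.toCode,
      OCode.ofNat_four_mul_add_five, OCode.ofNat_four_mul_add_six,
      OCode.ofNat_four_mul_add_seven, OCode.ofNat_four_mul_add_eight]

theorem primrec₂_toCodeStep : Primrec₂ toCodeStep := by
  have len : Primrec fun p : List Bool × List Code => p.2.length - 5 :=
    Primrec.nat_sub.comp (Primrec.list_length.comp Primrec.snd) (Primrec.const 5)
  have idx : Primrec fun p : List Bool × List Code => (p.2.length - 5) / 4 :=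
    Primrec.nat_div.comp len (Primrec.const 4)
  have rem : Primrec fun p : List Bool × List Code => (p.2.length - 5) % 4 :=
    Primrec.nat_mod.comp len (Primrec.const 4)
  have lookup : ∀ {f : List Bool × List Code → ℕ}, Primrec f →
      Primrec fun p : List Bool × List Code => p.2[f p]? :=
    fun hf => Primrec.list_getElem?.comp Primrec.snd hf
  have atoms : Primrec fun p : List Bool × List Code =>
      [Code.zero, .succ, .left, .right, oracleCode p.1][p.2.length]? :=
    Primrec.list_getElem?.comp (Primrec.list_cons.comp (Primrec.const _) <|
      Primrec.list_cons.comp (Primrec.const _) <| Primrec.list_cons.comp (Primrec.const _) <|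
      Primrec.list_cons.comp (Primrec.const _) <|
      Primrec.list_cons.comp (primrec_oracleCode.comp Primrec.fst) (Primrec.const []))
      (Primrec.list_length.comp Primrec.snd)
  have node : Primrec fun q : (List Bool × List Code) × Code × Code =>
      if (q.1.2.length - 5) % 4 = 0 then Code.pair q.2.1 q.2.2
      else if (q.1.2.length - 5) % 4 = 1 then Code.prec q.2.1 q.2.2 else Code.comp q.2.1 q.2.2 :=
    Primrec.ite (Primrec.eq.comp (rem.comp Primrec.fst) (Primrec.const 0))
      (Code.primrec₂_pair.comp (Primrec.fst.comp Primrec.snd) (Primrec.snd.comp Primrec.snd))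
      (Primrec.ite (Primrec.eq.comp (rem.comp Primrec.fst) (Primrec.const 1))
        (Code.primrec₂_prec.comp (Primrec.fst.comp Primrec.snd) (Primrec.snd.comp Primrec.snd))
        (Code.primrec₂_comp.comp (Primrec.fst.comp Primrec.snd) (Primrec.snd.comp Primrec.snd)))
  exact Primrec.ite (Primrec.nat_lt.comp (Primrec.list_length.comp Primrec.snd) (Primrec.const 5))
    atoms <| Primrec.ite (Primrec.eq.comp rem (Primrec.const 3))
      (Primrec.option_map (lookup idx) (Code.primrec_rfind'.comp Primrec.snd).to₂) <|
      Primrec.option_bind (lookup (Primrec.fst.comp (Primrec.unpair.comp idx))) <|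
        Primrec.option_map ((lookup (Primrec.snd.comp (Primrec.unpair.comp idx))).comp Primrec.fst)
          (node.comp ((Primrec.fst.comp Primrec.fst).pair
            ((Primrec.snd.comp Primrec.fst).pair Primrec.snd))).to₂

theorem primrec₂_toCode_ofNat : Primrec₂ fun σ i => (OCode.ofNat i).toCode σ :=
  Primrec.nat_strong_rec _ primrec₂_toCodeStep toCodeStep_spec

theorem Primrec.evaln_toCode_ofNat {β : Type*} [Primcodable β] {s : β → ℕ} {σ : β → List Bool}
    {c n : β → ℕ} (hs : Primrec s) (hσ : Primrec σ) (hc : Primrec c) (hn : Primrec n) :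
    Primrec fun b => Code.evaln (s b) ((OCode.ofNat (c b)).toCode (σ b)) (n b) :=
  Code.primrec_evaln.comp ((hs.pair (primrec₂_toCode_ofNat.comp hσ hc)).pair hn)

theorem Nat.Partrec.Code.eventually_evaln {c : Code} {n v : ℕ} (h : v ∈ c.eval n) :
    ∀ᶠ s in atTop, c.evaln s n = some v := by
  obtain ⟨s, hs⟩ := Code.evaln_complete.1 h
  exact eventually_atTop.2 ⟨s, fun s' h' => Code.evaln_mono h' hs⟩

def enumBy (e s n : ℕ) : Bool :=
  (Code.evaln s (Denumerable.ofNat Code e) n).isSome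

theorem enumBy_mono {e s s' n : ℕ} (h : s ≤ s') (hs : enumBy e s n) : enumBy e s' n := by
  rw [enumBy, Option.isSome_iff_exists] at hs ⊢
  obtain ⟨x, hx⟩ := hs
  exact ⟨x, Code.evaln_mono h hx⟩

theorem mem_WSet_iff {e n : ℕ} : n ∈ WSet e ↔ ∃ s, enumBy e s n := by
  simp only [WSet, Set.mem_ofPred_eq, Part.dom_iff_mem, Code.evaln_complete, enumBy,
    Option.isSome_iff_exists]
  exact exists_comm

theorem eventually_enumBy {e n : ℕ} (h : n ∈ WSet e) : ∀ᶠ s in atTop, enumBy e s n := by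
  obtain ⟨s, hs⟩ := mem_WSet_iff.1 h
  exact eventually_atTop.2 ⟨s, fun s' h' => enumBy_mono h' hs⟩

theorem Primrec.enumBy {β : Type*} [Primcodable β] {e s n : β → ℕ}
    (he : Primrec e) (hs : Primrec s) (hn : Primrec n) :
    Primrec fun b => _root_.enumBy (e b) (s b) (n b) :=
  Primrec.option_isSome.comp (Code.primrec_evaln.comp
    (((hs.pair ((Primrec.ofNat Code).comp he))).pair hn))

def stageSeg (e s k : ℕ) : List Bool :=
  (List.range k).map (enumBy e s)

def Settled (e s k : ℕ) : Prop :=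
  ∀ t, ∀ i < k, enumBy e t i → enumBy e s i

theorem stageSeg_eq_initSeg {e s k : ℕ} (h : Settled e s k) :
    stageSeg e s k = initSeg (WSet e) k := by
  refine List.map_congr_left fun i hi => ?_
  have hi := List.mem_range.1 hi
  by_cases hW : i ∈ WSet e
  · obtain ⟨t, ht⟩ := mem_WSet_iff.1 hW
    simp [chib, hW, h t i hi ht]
  · simpa [chib, hW] using fun hs => hW (mem_WSet_iff.2 ⟨s, hs⟩)

theorem eventually_settled (e k : ℕ) : ∀ᶠ s in atTop, Settled e s k := by
  have : ∀ i ∈ Finset.range k, ∀ᶠ s in atTop, ∀ t, enumBy e t i → enumBy e s i := by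
    intro i _
    by_cases hW : i ∈ WSet e
    · exact (eventually_enumBy hW).mono fun s hs _ _ => hs
    · exact Eventually.of_forall fun s t ht => absurd (mem_WSet_iff.2 ⟨t, ht⟩) hW
  filter_upwards [(eventually_all_finset _).2 this] with s hs t i hi
  exact hs i (Finset.mem_range.2 hi) t

theorem Primrec.stageSeg {β : Type*} [Primcodable β] {e s k : β → ℕ}
    (he : Primrec e) (hs : Primrec s) (hk : Primrec k) :
    Primrec fun b => _root_.stageSeg (e b) (s b) (k b) :=
  Primrec.list_map (Primrec.list_range.comp hk)
    (Primrec.enumBy (he.comp Primrec.fst) (hs.comp Primrec.fst) Primrec.snd).to₂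

noncomputable def bitAt (e s k ci m : ℕ) : Option ℕ :=
  Code.evaln s ((OCode.ofNat ci).toCode (stageSeg e s k)) m

noncomputable def bitSeg (e s k ci j : ℕ) : List Bool :=
  (List.range j).map fun m => bitAt e s k ci m = some 1

/-- The matrix of the `Σ⁰₄` form. Here `ci` and `di` index the reductions `Z = Φ_ci^{W_e}` and
`W_e = Φ_di^Z`; `s` is a stage, `k` a use for `Φ_ci`, `k₂ > n` a use for `Φ_di`, and `w` the
value of `W_e(n)`; only the two `Π⁰₁` checks depend on the stage `t`. -/
def IsWitness (T : List Bool → Bool) (e ci di n s k k₂ w t : ℕ) : Prop :=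
  (∀ i < k, enumBy e t i → enumBy e s i) ∧ n < k₂ ∧
  (∀ m < k₂, bitAt e s k ci m = some 0 ∨ bitAt e s k ci m = some 1) ∧
  T (bitSeg e s k ci n) = true ∧
  Code.evaln s ((OCode.ofNat di).toCode (bitSeg e s k ci k₂)) n = some w ∧
  (w = 1 ∧ enumBy e s n ∨ w = 0 ∧ ¬ enumBy e t n)

theorem mem_eval_of_bitAt {e s k ci m v : ℕ} (hs : Settled e s k) (h : bitAt e s k ci m = some v) :
    v ∈ (OCode.ofNat ci).eval (chi (WSet e)) m := by
  rw [bitAt, stageSeg_eq_initSeg hs] at h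
  exact OCode.mem_eval_of_evaln_toCode h

theorem bitSeg_eq_initSeg {e s k ci j : ℕ} {Z : Set ℕ}
    (h : ∀ m < j, bitAt e s k ci m = some (if m ∈ Z then 1 else 0)) :
    bitSeg e s k ci j = initSeg Z j := by
  refine List.map_congr_left fun m hm => ?_
  by_cases hZ : m ∈ Z <;> simp [h m (List.mem_range.1 hm), hZ, chib]

theorem exists_isWitness {T : List Bool → Bool} {Z : Set ℕ} {e ci di : ℕ}
    (hZ : ∀ n, T (initSeg Z n) = true)
    (hci : ∀ m, (OCode.ofNat ci).eval (chi (WSet e)) m = Part.some (if m ∈ Z then 1 else 0))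
    (hdi : ∀ n, (OCode.ofNat di).eval (chi Z) n = Part.some (if n ∈ WSet e then 1 else 0))
    (n : ℕ) : ∃ s k k₂ w, ∀ t, IsWitness T e ci di n s k k₂ w t := by
  set W := WSet e
  obtain ⟨k₂, hnk₂, hk₂⟩ := ((eventually_gt_atTop n).and
    (OCode.eventually_mem_eval_toCode (hdi n ▸ Part.mem_some _))).exists
  obtain ⟨k, hk⟩ := ((eventually_all_finset (Finset.range k₂)).2 fun m _ =>
    OCode.eventually_mem_eval_toCode (hci m ▸ Part.mem_some _)).exists
  have hn : ∀ᶠ s in atTop, n ∈ W → enumBy e s n := by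
    by_cases hnW : n ∈ W
    · exact (eventually_enumBy hnW).mono fun s hs _ => hs
    · exact Eventually.of_forall fun s h => absurd h hnW
  obtain ⟨s, hset, hbits, hw, hns⟩ := ((eventually_settled e k).and <|
    ((eventually_all_finset (Finset.range k₂)).2 fun m hm => Code.eventually_evaln (hk m hm)).and <|
    (Code.eventually_evaln hk₂).and hn).exists
  have hbit : ∀ m < k₂, bitAt e s k ci m = some (if m ∈ Z then 1 else 0) := fun m hm => by
    rw [bitAt, stageSeg_eq_initSeg hset]
    exact hbits m (Finset.mem_range.2 hm)
  refine ⟨s, k, k₂, if n ∈ W then 1 else 0, fun t =>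
    ⟨fun i hi => hset t i hi, hnk₂, ?_, ?_, ?_, ?_⟩⟩
  · intro m hm
    by_cases hmZ : m ∈ Z <;> simp [hbit m hm, hmZ]
  · rw [bitSeg_eq_initSeg fun m hm => hbit m (hm.trans hnk₂)]
    exact hZ n
  · rwa [bitSeg_eq_initSeg hbit]
  · by_cases hnW : n ∈ W
    · exact Or.inl ⟨if_pos hnW, hns hnW⟩
    · exact Or.inr ⟨if_neg hnW, fun ht => hnW (mem_WSet_iff.2 ⟨t, ht⟩)⟩

theorem bitAt_eq_ite {e s k ci m : ℕ} (hs : Settled e s k)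
    (h : bitAt e s k ci m = some 0 ∨ bitAt e s k ci m = some 1) :
    bitAt e s k ci m =
      some (if 1 ∈ (OCode.ofNat ci).eval (chi (WSet e)) m then 1 else 0) := by
  rcases h with h | h
  · have h0 := mem_eval_of_bitAt hs h
    rw [h, if_neg fun h1 => zero_ne_one (Part.mem_unique h0 h1)]
  · rw [h, if_pos (mem_eval_of_bitAt hs h)]

theorem turingEquiv_of_isWitness {T : List Bool → Bool} {e ci di : ℕ}
    (H : ∀ n, ∃ s k k₂ w, ∀ t, IsWitness T e ci di n s k k₂ w t) :
    ∃ Z : Set ℕ, (∀ n, T (initSeg Z n) = true) ∧ TuringEquiv Z (WSet e) := by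
  set W := WSet e
  set Z : Set ℕ := {m | 1 ∈ (OCode.ofNat ci).eval (chi W) m}
  have key : ∀ n, ∃ s k k₂ w, Settled e s k ∧ n < k₂ ∧
      (∀ m < k₂, bitAt e s k ci m = some (if m ∈ Z then 1 else 0)) ∧ T (bitSeg e s k ci n) ∧
      Code.evaln s ((OCode.ofNat di).toCode (bitSeg e s k ci k₂)) n = some w ∧
      w = if n ∈ W then 1 else 0 := by
    intro n
    obtain ⟨s, k, k₂, w, hw⟩ := H n
    obtain ⟨-, hnk₂, hbits, hT, hev, hans⟩ := hw 0
    have hset : Settled e s k := fun t => (hw t).1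
    refine ⟨s, k, k₂, w, hset, hnk₂, fun m hm => bitAt_eq_ite hset (hbits m hm), hT, hev, ?_⟩
    rcases hans with ⟨rfl, hs⟩ | ⟨rfl, -⟩
    · rw [if_pos (mem_WSet_iff.2 ⟨s, hs⟩)]
    · refine (if_neg fun hn => ?_).symm
      obtain ⟨t, ht⟩ := mem_WSet_iff.1 hn
      exact ((hw t).2.2.2.2.2.resolve_left fun h => by simp at h).2 ht
  refine ⟨Z, fun n => ?_, ⟨OCode.ofNat ci, fun m => ?_⟩, ⟨OCode.ofNat di, fun n => ?_⟩⟩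
  · obtain ⟨s, k, k₂, w, -, hnk₂, hbit, hT, -⟩ := key n
    rwa [bitSeg_eq_initSeg fun m hm => hbit m (hm.trans hnk₂)] at hT
  · obtain ⟨s, k, k₂, w, hset, hmk₂, hbit, -⟩ := key m
    exact Part.eq_some_iff.2 (mem_eval_of_bitAt hset (hbit m hmk₂))
  · obtain ⟨s, k, k₂, w, -, -, hbit, -, hev, rfl⟩ := key n
    rw [bitSeg_eq_initSeg hbit] at hev
    exact Part.eq_some_iff.2 (OCode.mem_eval_of_evaln_toCode hev)

theorem ComputablePred.and {α : Type*} [Primcodable α] {p q : α → Prop}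
    (hp : ComputablePred p) (hq : ComputablePred q) : ComputablePred fun a => p a ∧ q a := by
  obtain ⟨_, hp⟩ := hp
  obtain ⟨_, hq⟩ := hq
  exact ⟨inferInstance, (Primrec.and.to_comp.comp hp hq).of_eq fun a => (Bool.decide_and _ _).symm⟩

theorem PrimrecPred.forall_lt_of_primrecRel {β : Type*} [Primcodable β] {k : β → ℕ}
    {R : ℕ → β → Prop} (hk : Primrec k) (hR : PrimrecRel R) :
    PrimrecPred fun b => ∀ i < k b, R i b :=
  (hR.forall_mem_list.comp (Primrec.list_range.comp hk) Primrec.id).of_eq fun b => by simp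

theorem Primrec.bitAt {β : Type*} [Primcodable β] {e s k ci m : β → ℕ} (he : Primrec e)
    (hs : Primrec s) (hk : Primrec k) (hci : Primrec ci) (hm : Primrec m) :
    Primrec fun b => _root_.bitAt (e b) (s b) (k b) (ci b) (m b) :=
  Primrec.evaln_toCode_ofNat hs (Primrec.stageSeg he hs hk) hci hm

theorem Primrec.bitSeg {β : Type*} [Primcodable β] {e s k ci j : β → ℕ} (he : Primrec e)
    (hs : Primrec s) (hk : Primrec k) (hci : Primrec ci) (hj : Primrec j) :
    Primrec fun b => _root_.bitSeg (e b) (s b) (k b) (ci b) (j b) :=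
  Primrec.list_map (Primrec.list_range.comp hj) (PrimrecPred.decide <| Primrec.eq.comp
    (Primrec.bitAt (he.comp .fst) (hs.comp .fst) (hk.comp .fst) (hci.comp .fst) .snd)
    (Primrec.const _)).to₂

theorem ComputablePred.isWitness {T : List Bool → Bool} (hT : Computable T) {β : Type*}
    [Primcodable β] {e ci di n s k k₂ w t : β → ℕ} (he : Primrec e) (hci : Primrec ci)
    (hdi : Primrec di) (hn : Primrec n) (hs : Primrec s) (hk : Primrec k) (hk₂ : Primrec k₂)
    (hw : Primrec w) (ht : Primrec t) :
    ComputablePred fun b =>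
      IsWitness T (e b) (ci b) (di b) (n b) (s b) (k b) (k₂ b) (w b) (t b) := by
  have enum : ∀ {f g : β → ℕ}, Primrec f → Primrec g →
      PrimrecPred fun b => enumBy (e b) (f b) (g b) = true := fun hf hg =>
    Primrec.eq.comp (Primrec.enumBy he hf hg) (Primrec.const true)
  have settled : PrimrecPred fun b => ∀ i < k b, enumBy (e b) (t b) i → enumBy (e b) (s b) i :=
    PrimrecPred.forall_lt_of_primrecRel hk <| PrimrecPred.of_eq (PrimrecPred.or
      (Primrec.eq.comp (Primrec.enumBy (he.comp .snd) (ht.comp .snd) .fst) (Primrec.const true)).not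
      (Primrec.eq.comp (Primrec.enumBy (he.comp .snd) (hs.comp .snd) .fst) (Primrec.const true)))
      fun _ => imp_iff_not_or.symm
  have bits : PrimrecPred fun b => ∀ m < k₂ b,
      bitAt (e b) (s b) (k b) (ci b) m = some 0 ∨ bitAt (e b) (s b) (k b) (ci b) m = some 1 := by
    have hb := Primrec.bitAt (he.comp .snd) (hs.comp .snd) (hk.comp .snd) (hci.comp .snd) .fst
    exact PrimrecPred.forall_lt_of_primrecRel hk₂
      ((Primrec.eq.comp hb (Primrec.const _)).or (Primrec.eq.comp hb (Primrec.const _)))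
  have tree : ComputablePred fun b => T (bitSeg (e b) (s b) (k b) (ci b) (n b)) = true :=
    ⟨inferInstance, (hT.comp (Primrec.bitSeg he hs hk hci hn).to_comp).of_eq fun _ => by simp⟩
  have use : PrimrecPred fun b => Code.evaln (s b)
      ((OCode.ofNat (di b)).toCode (bitSeg (e b) (s b) (k b) (ci b) (k₂ b))) (n b) = some (w b) :=
    Primrec.eq.comp (Primrec.evaln_toCode_ofNat hs (Primrec.bitSeg he hs hk hci hk₂) hdi hn)
      (Primrec.option_some.comp hw)
  have answer : PrimrecPred fun b =>
      w b = 1 ∧ enumBy (e b) (s b) (n b) ∨ w b = 0 ∧ ¬ enumBy (e b) (t b) (n b) :=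
    ((Primrec.eq.comp hw (Primrec.const 1)).and (enum hs hn)).or
      ((Primrec.eq.comp hw (Primrec.const 0)).and (enum ht hn).not)
  exact settled.computablePred.and ((Primrec.nat_lt.comp hn hk₂).computablePred.and
    (bits.computablePred.and (tree.and (use.computablePred.and answer.computablePred))))

theorem computablePred_isWitness {T : List Bool → Bool} (hT : Computable T) :
    ComputablePred fun x : ℕ × (ℕ × ℕ) × ℕ × (ℕ × ℕ × ℕ × ℕ) × ℕ =>
      IsWitness T x.1 x.2.1.1 x.2.1.2 x.2.2.1 x.2.2.2.1.1 x.2.2.2.1.2.1 x.2.2.2.1.2.2.1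
        x.2.2.2.1.2.2.2 x.2.2.2.2 := by
  have ha : Primrec fun x : ℕ × (ℕ × ℕ) × ℕ × (ℕ × ℕ × ℕ × ℕ) × ℕ => x.2.1 :=
    Primrec.fst.comp Primrec.snd
  have hq : Primrec fun x : ℕ × (ℕ × ℕ) × ℕ × (ℕ × ℕ × ℕ × ℕ) × ℕ => x.2.2.2.1 :=
    Primrec.fst.comp (Primrec.snd.comp (Primrec.snd.comp Primrec.snd))
  exact ComputablePred.isWitness hT Primrec.fst (Primrec.fst.comp ha) (Primrec.snd.comp ha)
    (Primrec.fst.comp (Primrec.snd.comp Primrec.snd)) (Primrec.fst.comp hq)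
    (Primrec.fst.comp (Primrec.snd.comp hq))
    (Primrec.fst.comp (Primrec.snd.comp (Primrec.snd.comp hq)))
    (Primrec.snd.comp (Primrec.snd.comp (Primrec.snd.comp hq)))
    (Primrec.snd.comp (Primrec.snd.comp (Primrec.snd.comp Primrec.snd)))

theorem sigma04_of_computablePred {α β : Type*} [Denumerable α] [Denumerable β] {S : Set ℕ}
    {M : ℕ × α × ℕ × β × ℕ → Prop} (hM : ComputablePred M)
    (hS : ∀ e, e ∈ S ↔ ∃ a, ∀ n, ∃ q, ∀ t, M (e, a, n, q, t)) : Sigma04 S := by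
  obtain ⟨_, hM⟩ := hM
  have hα : Function.Surjective (Denumerable.ofNat α) :=
    Function.LeftInverse.surjective Denumerable.ofNat_encode
  have hβ : Function.Surjective (Denumerable.ofNat β) :=
    Function.LeftInverse.surjective Denumerable.ofNat_encode
  refine ⟨fun x => decide (M (x.1, Denumerable.ofNat α x.2.1, x.2.2.1,
    Denumerable.ofNat β x.2.2.2.1, x.2.2.2.2)), hM.comp ?_, fun e => ?_⟩
  · refine (Primrec.fst.pair (((Primrec.ofNat α).comp (Primrec.fst.comp Primrec.snd)).pair
      ((Primrec.fst.comp (Primrec.snd.comp Primrec.snd)).pair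
        (((Primrec.ofNat β).comp (Primrec.fst.comp (Primrec.snd.comp (Primrec.snd.comp
          Primrec.snd)))).pair (Primrec.snd.comp (Primrec.snd.comp (Primrec.snd.comp
            Primrec.snd))))))).to_comp
  · simp only [hS, hα.exists, hβ.exists, decide_eq_true_eq]

/-- For a `Π⁰₁` class `P`, the index set
`{ e : deg (W_e) is realized in P }` is `Σ⁰₄`. -/
theorem stmt6 (P : Set (Set ℕ)) (hP : Pi01Class P) :
    Sigma04 { e | ∃ Z ∈ P, TuringEquiv Z (WSet e) } := by
  obtain ⟨T, hT, hPT⟩ := hP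
  refine sigma04_of_computablePred (computablePred_isWitness hT) fun e => ?_
  simp only [Prod.exists]
  constructor
  · rintro ⟨Z, hZP, ⟨cz, hcz⟩, ⟨cw, hcw⟩⟩
    obtain ⟨ci, rfl⟩ := OCode.ofNat_surjective cz
    obtain ⟨di, rfl⟩ := OCode.ofNat_surjective cw
    exact ⟨ci, di, exists_isWitness ((hPT Z).1 hZP) hcz hcw⟩
  · rintro ⟨ci, di, H⟩
    obtain ⟨Z, hZT, hZW⟩ := turingEquiv_of_isWitness H
    exact ⟨Z, (hPT Z).2 hZT, hZW⟩
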